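/- Let G be a finite graph and v a vertex. Every closed walk of length k in the unraveled ball G̃(v,r) starting at the root projects (by taking terminal vertices of the non-backtracking walks) to a closed walk of length k in the ball G(v,r) starting at v, and this projection is injective; consequently the number of closed walks of length k at v in G(v,r) is at least the number of closed walks of length k at the root in G̃(v,r). -/

import Mathlib

open Classical Real Filter SimpleGraph

/-- The multiset of adjacency eigenvalues of a finite simple graph, indexed by vertices. -/
noncomputable def adjEigs {V : Type*} [Fintype V] (G : SimpleGraph V) : V → ℝ :=
  Matrix.IsHermitian.eigenvalues (A := G.adjMatrix ℝ)
    (by rw [Matrix.IsHermitian, Matrix.conjTranspose_eq_transpose_of_trivial]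
        exact SimpleGraph.isSymm_adjMatrix G)

/-- The spectral radius (largest adjacency eigenvalue) of a finite simple graph. -/
noncomputable def lam1 {V : Type*} [Fintype V] (G : SimpleGraph V) : ℝ := ⨆ v, adjEigs G v

/-- The second largest adjacency eigenvalue (with multiplicity) of a finite simple graph. -/
noncomputable def lam2 {V : Type*} [Fintype V] (G : SimpleGraph V) : ℝ :=
  ⨆ p : {p : V × V // p.1 ≠ p.2}, min (adjEigs G p.1.1) (adjEigs G p.1.2)

/-- A non-backtracking walk of length `≤ r` starting at `v`: recorded as its list of
vertices (of length `≤ r + 1`, starting with `v`). -/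
structure NBWalk {V : Type*} (G : SimpleGraph V) (v : V) (r : ℕ) where
  toList : List V
  ne_nil : toList ≠ []
  head_eq : toList.head ne_nil = v
  length_le : toList.length ≤ r + 1
  chain : toList.Chain' G.Adj
  nonback : ∀ i : ℕ, ∀ h : i + 2 < toList.length,
    toList.get ⟨i, by omega⟩ ≠ toList.get ⟨i + 2, h⟩

/-- The unraveled ball of radius `r` centered at `v`: vertices are the non-backtracking
walks of length `≤ r` starting at `v`, two walks adjacent iff one is a one-step
extension of the other. -/
def unravBall {V : Type*} (G : SimpleGraph V) (v : V) (r : ℕ) : SimpleGraph (NBWalk G v r) :=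
  SimpleGraph.fromRel (fun w w' => ∃ x, w'.toList = w.toList ++ [x])

noncomputable instance {V : Type*} [Fintype V] {G : SimpleGraph V} {v : V} {r : ℕ} :
    Fintype (NBWalk G v r) :=
  haveI : Finite {l : List V // l.length ≤ r + 1} :=
    (List.finite_length_le V (r + 1)).to_subtype
  haveI : Finite (NBWalk G v r) := Finite.of_injective
    (fun w => (⟨w.toList, w.length_le⟩ : {l : List V // l.length ≤ r + 1}))
    (by rintro ⟨⟩ ⟨⟩ h; simp_all)
  Fintype.ofFinite _

/-- The root of the unraveled ball: the length-`0` walk `(v)`. -/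
def nbRoot {V : Type*} (G : SimpleGraph V) (v : V) (r : ℕ) : NBWalk G v r :=
  ⟨[v], by simp, rfl, by simp, List.isChain_singleton v, by intro i h; simp at h⟩

/-- The terminal vertex of a non-backtracking walk. -/
def NBWalk.term {V : Type*} {G : SimpleGraph V} {v : V} {r : ℕ} (w : NBWalk G v r) : V :=
  w.toList.getLast w.ne_nil

/-! The terminal-vertex map is a graph homomorphism from the unraveled ball to the ball, and it is
injective on the neighbourhood of every vertex: two one-step extensions of a walk with the same
terminal vertex coincide, so do two one-step truncations, and an extension `w ++ [x]` and a
truncation `u` with `w = u ++ [y]` cannot share a terminal vertex, since `u ++ [y, x]` does not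
backtrack. A walk along a locally injective map is determined by the image of its support
(induct along the walk), which gives both injectivity and the inequality of cardinalities. -/

namespace SimpleGraph.Walk

variable {V W : Type*} {G : SimpleGraph V}

theorem eq_of_support_map_eq (f : V → W)
    (hf : ∀ ⦃u a b⦄, G.Adj u a → G.Adj u b → f a = f b → a = b) :
    ∀ {u w : V} {p q : G.Walk u w}, p.support.map f = q.support.map f → p = q
  | _, _, nil, nil, _ => rfl
  | _, _, nil, cons _ q, h => by simp at h
  | _, _, cons _ p, nil, h => by simp at h
  | _, _, cons ha p, cons hb q, h => by
    rw [support_cons, support_cons, List.map_cons, List.map_cons, List.cons_inj_right] at h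
    have hhead := congrArg List.head? h
    rw [List.head?_map, List.head?_map, List.head?_eq_some_head p.support_ne_nil,
      List.head?_eq_some_head q.support_ne_nil, head_support, head_support] at hhead
    obtain rfl : _ = _ := hf ha hb (Option.some_injective _ hhead)
    rw [eq_of_support_map_eq f hf h]

end SimpleGraph.Walk

namespace NBWalk

variable {V : Type*} {G : SimpleGraph V} {v : V} {r : ℕ}

theorem toList_injective : Function.Injective (toList : NBWalk G v r → List V) := by
  rintro ⟨⟩ ⟨⟩ h
  simp_all

theorem term_eq_of_toList_eq_append {w : NBWalk G v r} {l : List V} {x : V}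
    (h : w.toList = l ++ [x]) : w.term = x := by
  simp_rw [term, h, List.getLast_concat]

theorem term_adj_of_toList_eq_append {a b : NBWalk G v r} {x : V}
    (h : b.toList = a.toList ++ [x]) : G.Adj a.term b.term := by
  have hchain := b.chain
  rw [h, List.Chain', List.isChain_append] at hchain
  rw [term_eq_of_toList_eq_append h]
  exact hchain.2.2 _ (List.getLast?_eq_some_getLast a.ne_nil) x rfl

theorem term_ne_of_toList_eq_append_pair {a b : NBWalk G v r} {x y : V}
    (h : a.toList = b.toList ++ [y, x]) : a.term ≠ b.term := by
  obtain ⟨l, z, hb⟩ : ∃ l z, b.toList = l ++ [z] :=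
    ⟨_, _, (List.dropLast_append_getLast b.ne_nil).symm⟩
  have hzx : z ≠ x := by simpa [h, hb] using a.nonback l.length (by simp [h, hb])
  rw [term_eq_of_toList_eq_append (x := x) (l := b.toList ++ [y]) (by simp [h]),
    term_eq_of_toList_eq_append hb]
  exact hzx.symm

theorem term_mem_ball (w : NBWalk G v r) : w.term ∈ {u | G.Reachable v u ∧ G.dist v u ≤ r} := by
  have hchain : w.toList.IsChain G.Adj := w.chain
  obtain ⟨p, hp⟩ : ∃ p : G.Walk v w.term, p.length = w.toList.length - 1 :=
    ⟨(Walk.ofSupport _ w.ne_nil hchain).copy w.head_eq rfl,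
      (Walk.length_copy _ _ _).trans (Walk.length_ofSupport _ _)⟩
  have hr := w.length_le
  exact ⟨p.reachable, (dist_le p).trans (by omega)⟩

theorem term_adj_of_unravBall_adj {a b : NBWalk G v r} (h : (unravBall G v r).Adj a b) :
    G.Adj a.term b.term := by
  obtain ⟨-, ⟨x, hx⟩ | ⟨x, hx⟩⟩ := (fromRel_adj _ _ _).1 h
  · exact term_adj_of_toList_eq_append hx
  · exact (term_adj_of_toList_eq_append hx).symm

theorem eq_of_unravBall_adj_of_term_eq {w a b : NBWalk G v r} (ha : (unravBall G v r).Adj w a)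
    (hb : (unravBall G v r).Adj w b) (h : a.term = b.term) : a = b := by
  obtain ⟨-, ⟨x, hx⟩ | ⟨x, hx⟩⟩ := (fromRel_adj _ _ _).1 ha <;>
    obtain ⟨-, ⟨y, hy⟩ | ⟨y, hy⟩⟩ := (fromRel_adj _ _ _).1 hb
  · rw [term_eq_of_toList_eq_append hx, term_eq_of_toList_eq_append hy] at h
    exact toList_injective (by rw [hx, hy, h])
  · exact absurd h (term_ne_of_toList_eq_append_pair (x := x) (y := y) (by simp [hx, hy]))
  · exact absurd h.symm (term_ne_of_toList_eq_append_pair (x := y) (y := x) (by simp [hx, hy]))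
  · exact toList_injective (List.append_inj' (hx.symm.trans hy) rfl).1

def termHom : unravBall G v r →g G.induce {u | G.Reachable v u ∧ G.dist v u ≤ r} where
  toFun w := ⟨w.term, w.term_mem_ball⟩
  map_rel' := term_adj_of_unravBall_adj

theorem support_map_termHom {a b : NBWalk G v r} (p : (unravBall G v r).Walk a b) :
    (p.map termHom).support.map Subtype.val = p.support.map term := by
  rw [Walk.support_map, List.map_map]
  rfl

theorem walk_eq_of_support_map_term_eq {a b : NBWalk G v r} {p q : (unravBall G v r).Walk a b}
    (h : p.support.map term = q.support.map term) : p = q :=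
  Walk.eq_of_support_map_eq term (fun _ _ _ ↦ eq_of_unravBall_adj_of_term_eq) h

end NBWalk

/-- Closed walks at the root of the unraveled ball `G̃(v, r)` project injectively (by
taking terminal vertices) to closed walks at `v` in the ball `G(v, r)`; consequently the
ball has at least as many closed walks of each length `k` at `v`. -/
theorem unravBall_closed_walks_project_injective {V : Type*} [Fintype V] (G : SimpleGraph V)
    (v : V) (r k : ℕ) :
    Function.Injective
      (fun p : {p : (unravBall G v r).Walk (nbRoot G v r) (nbRoot G v r) // p.length = k} =>
        p.1.support.map NBWalk.term) ∧
    Fintype.card {p : (unravBall G v r).Walk (nbRoot G v r) (nbRoot G v r) // p.length = k}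
      ≤ Fintype.card
          {q : (G.induce {u | G.Reachable v u ∧ G.dist v u ≤ r}).Walk
                ⟨v, ⟨SimpleGraph.Reachable.refl v, by rw [SimpleGraph.dist_self]; exact Nat.zero_le r⟩⟩
                ⟨v, ⟨SimpleGraph.Reachable.refl v, by rw [SimpleGraph.dist_self]; exact Nat.zero_le r⟩⟩ // q.length = k} := by
  -- `NBWalk.termHom (nbRoot G v r)` is `⟨v, _⟩` by definition, so no `Walk.copy` is needed.
  refine ⟨fun p q h ↦ Subtype.ext (NBWalk.walk_eq_of_support_map_term_eq h),
    Fintype.card_le_of_injective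
      (fun p ↦ ⟨p.1.map NBWalk.termHom, (Walk.length_map _ _).trans p.2⟩) fun p q h ↦ ?_⟩
  refine Subtype.ext (NBWalk.walk_eq_of_support_map_term_eq ?_)
  rw [← NBWalk.support_map_termHom, ← NBWalk.support_map_termHom]
  exact congrArg (fun q ↦ q.1.support.map Subtype.val) h
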